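/- Monotonicity sufficient condition for cubic Hermite: if y₁ ≤ y₂, δ = (y₂ − y₁)/h, and 0 ≤ d₁ ≤ 3δ and 0 ≤ d₂ ≤ 3δ, then the cubic Hermite interpolant p on [0,h] satisfies p'(s) ≥ 0 for all s ∈ [0,h] (hence p is monotone nondecreasing and does not overshoot the data). -/
import Mathlib


theorem cubic_hermite_monotone_sufficient (h y₁ y₂ d₁ d₂ δ : ℝ) (hh : 0 < h)
    (hy : y₁ ≤ y₂) (hδ : δ = (y₂ - y₁) / h)
    (hd₁ : 0 ≤ d₁ ∧ d₁ ≤ 3 * δ) (hd₂ : 0 ≤ d₂ ∧ d₂ ≤ 3 * δ)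
    (p : ℝ → ℝ)
    (hp : ∀ s, p s = (3*h*s^2 - 2*s^3)/h^3 * y₂ + (h^3 - 3*h*s^2 + 2*s^3)/h^3 * y₁
        + s^2*(s - h)/h^2 * d₂ + s*(s - h)^2/h^2 * d₁) :
    ∀ s ∈ Set.Icc (0:ℝ) h, 0 ≤ deriv p s := by
  have hne : (h:ℝ) ≠ 0 := ne_of_gt hh
  set c1 : ℝ := d₁ with hc1
  set c2 : ℝ := 3*(y₂ - y₁)/h^2 - d₂/h - 2*d₁/h with hc2
  set c3 : ℝ := -2*(y₂ - y₁)/h^3 + d₂/h^2 + d₁/h^2 with hc3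
  have hpf : p = fun s : ℝ => y₁ + c1*s + c2*s^2 + c3*s^3 := by
    funext s
    rw [hp s, hc1, hc2, hc3]
    field_simp
    ring
  intro s hs
  obtain ⟨hs0, hsh⟩ := hs
  have H : HasDerivAt p (c1 + 2*c2*s + 3*c3*s^2) s := by
    rw [hpf]
    have h1 : HasDerivAt (fun x : ℝ => c1*x) c1 s := by
      simpa using (hasDerivAt_id s).const_mul c1
    have h2 : HasDerivAt (fun x : ℝ => c2*x^2) (2*c2*s) s := by
      simpa [mul_comm, mul_assoc, mul_left_comm] using (hasDerivAt_pow 2 s).const_mul c2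
    have h3 : HasDerivAt (fun x : ℝ => c3*x^3) (3*c3*s^2) s := by
      simpa [mul_comm, mul_assoc, mul_left_comm] using (hasDerivAt_pow 3 s).const_mul c3
    have := ((h1.add h2).add h3).const_add y₁
    simpa [add_assoc] using this
  rw [H.deriv]
  obtain ⟨hd1a, hd1b⟩ := hd₁
  obtain ⟨hd2a, hd2b⟩ := hd₂
  have hyd : y₂ - y₁ = δ * h := by rw [hδ]; field_simp
  have hE : 0 ≤ 6*s*(h-s)*δ + s*(3*s-2*h)*d₂ + (s-h)*(3*s-h)*d₁ := by
    have hδ0 : 0 ≤ δ := by nlinarith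
    rcases le_or_gt s (h/3) with hc | hc
    · nlinarith [mul_nonneg (by linarith : (0:ℝ) ≤ 3*δ - d₂) (mul_nonneg hs0 (by linarith : (0:ℝ) ≤ 2*h-3*s)),
        mul_nonneg hd1a (mul_nonneg (by linarith : (0:ℝ) ≤ h-s) (by linarith : (0:ℝ) ≤ h-3*s)),
        mul_nonneg hδ0 (sq_nonneg s)]
    · rcases le_or_gt s (2*h/3) with hc2' | hc2'
      · nlinarith [mul_nonneg (by linarith : (0:ℝ) ≤ 3*δ - d₂) (mul_nonneg hs0 (by linarith : (0:ℝ) ≤ 2*h-3*s)),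
          mul_nonneg (by linarith : (0:ℝ) ≤ 3*δ - d₁) (mul_nonneg (by linarith : (0:ℝ) ≤ h-s) (by linarith : (0:ℝ) ≤ 3*s-h)),
          mul_nonneg hδ0 (sq_nonneg (2*s-h))]
      · nlinarith [mul_nonneg hd2a (mul_nonneg hs0 (by linarith : (0:ℝ) ≤ 3*s-2*h)),
          mul_nonneg (by linarith : (0:ℝ) ≤ 3*δ - d₁) (mul_nonneg (by linarith : (0:ℝ) ≤ h-s) (by linarith : (0:ℝ) ≤ 3*s-h)),
          mul_nonneg hδ0 (sq_nonneg (s-h))]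
  have key : (c1 + 2*c2*s + 3*c3*s^2) * h^3 = h * (6*s*(h-s)*δ + s*(3*s-2*h)*d₂ + (s-h)*(3*s-h)*d₁) := by
    rw [hc1, hc2, hc3, hyd]
    field_simp
    ring
  have h3p : (0:ℝ) < h^3 := by positivity
  have := mul_nonneg (le_of_lt hh) hE
  nlinarith [key, h3p]
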